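/- arXiv:2512.08468 — 2 statements merged into one kernel-verified Lean document; each statement's English description precedes it below -/
import Mathlib

section
/- Assume the pre-diffeo-valued field structure is dense. Let n ≥ 1, let O₁, …, Oₙ be valuation subrings of K, set S = O₁ ∩ ⋯ ∩ Oₙ, and assume K contains at least n pairwise distinct elements algebraic over the prime field F_p. If a ∈ K satisfies a·S ⊆ Q, then a = 0. -/
def AlgebraicOverPrime (p : ℕ) {K : Type*} [Field K] [CharP K p] (q : K) : Prop :=
  ∃ f : Polynomial (ZMod p), f ≠ 0 ∧ Polynomial.eval₂ (ZMod.castHom dvd_rfl K) q f = 0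

structure PreDiffeoValued (p : ℕ) (K : Type*) [Field K]
    (Γ : Type*) [AddCommGroup Γ] [LinearOrder Γ] [IsOrderedAddMonoid Γ]
    (k : Type*) [Field k] (D : Type*) [AddCommGroup D] where
  v : K → WithTop Γ
  v_surj : ∀ γ : Γ, ∃ x : K, v x = (γ : WithTop Γ)
  v_eq_top_iff : ∀ x : K, v x = ⊤ ↔ x = 0
  v_mul : ∀ x y : K, v (x * y) = v x + v y
  v_add : ∀ x y : K, min (v x) (v y) ≤ v (x + y)
  O : Subring K
  mem_O_iff : ∀ x : K, x ∈ O ↔ 0 ≤ v x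
  res : K → k
  res_add : ∀ x ∈ O, ∀ y ∈ O, res (x + y) = res x + res y
  res_mul : ∀ x ∈ O, ∀ y ∈ O, res (x * y) = res x * res y
  res_one : res 1 = 1
  res_surjective : ∀ z : k, ∃ x ∈ O, res x = z
  res_eq_zero_iff : ∀ x ∈ O, (res x = 0 ↔ 0 < v x)
  smul : K → D → D
  smul_add : ∀ a ∈ O, ∀ x y : D, smul a (x + y) = smul a x + smul a y
  add_smul : ∀ a ∈ O, ∀ b ∈ O, ∀ x : D, smul (a + b) x = smul a x + smul b x
  mul_smul : ∀ a ∈ O, ∀ b ∈ O, ∀ x : D, smul (a * b) x = smul a (smul b x)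
  one_smul : ∀ x : D, smul 1 x = x
  divisible : ∀ a ∈ O, a ≠ 0 → ∀ y : D, ∃ x : D, smul a x = y
  total : ∀ x y : D, (∃ a ∈ O, x = smul a y) ∨ (∃ a ∈ O, y = smul a x)
  phi : k → D
  phi_add : ∀ z w : k, phi (z + w) = phi z + phi w
  phi_injective : Function.Injective phi
  phi_smul : ∀ a ∈ O, ∀ z : k, phi (res a * z) = smul a (phi z)
  R : Subring K
  R_le_O : (R : Set K) ⊆ (O : Set K)
  d : K → k
  d_add : ∀ x ∈ R, ∀ y ∈ R, d (x + y) = d x + d y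
  d_leibniz : ∀ x ∈ R, ∀ y ∈ R, d (x * y) = res x * d y + res y * d x
  d_surjective : ∀ z : k, ∃ x ∈ R, d x = z
  pi : K → D
  pi_add : ∀ x ∈ O, ∀ y ∈ O, pi (x + y) = pi x + pi y
  pi_qsmul : ∀ q ∈ R, d q = 0 → ∀ x ∈ O, pi (q * x) = smul q (pi x)
  pi_surjective : ∀ y : D, ∃ x ∈ O, pi x = y
  pi_eq_zero_iff : ∀ x ∈ O, (pi x = 0 ↔ x ∈ R ∧ d x = 0)
  pi_eq_phi_d : ∀ x ∈ R, pi x = phi (d x)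
  char_two_sq : p = 2 → ∀ a ∈ O, a ^ 2 ∈ R ∧ d (a ^ 2) = 0
  char_odd_pi : p ≠ 2 → ∀ a ∈ O, ∀ b ∈ O, pi (a * b) = smul a (pi b) + smul b (pi a)

/-- A pre-diffeo-valued field structure together with the secondary valuation
`val : D → Γ ∪ {∞}`. -/
structure PreDiffeoValuedS (p : ℕ) (K : Type*) [Field K]
    (Γ : Type*) [AddCommGroup Γ] [LinearOrder Γ] [IsOrderedAddMonoid Γ]
    (k : Type*) [Field k] (D : Type*) [AddCommGroup D]
    extends PreDiffeoValued p K Γ k D where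
  val : D → WithTop Γ
  val_nonpos_or_top : ∀ x : D, val x ≤ 0 ∨ val x = ⊤
  val_eq_top_iff : ∀ x : D, val x = ⊤ ↔ x = 0
  val_nonneg_iff : ∀ x : D, 0 ≤ val x ↔ ∃ z : k, phi z = x
  val_smul_of_nonpos : ∀ a ∈ O, ∀ x : D, v a + val x ≤ 0 → val (smul a x) = v a + val x
  val_smul_of_pos : ∀ a ∈ O, ∀ x : D, 0 < v a + val x → val (smul a x) = ⊤
  val_add : ∀ x y : D, min (val x) (val y) ≤ val (x + y)
  smul_of_val_le : ∀ x y : D, val x ≤ val y → ∃ a ∈ O, y = smul a x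
  smul_of_val_lt : ∀ x y : D, val x < val y → ∃ a : K, 0 < v a ∧ y = smul a x
  val_unbounded : ∀ γ : Γ, ∃ x : D, val x ≤ (γ : WithTop Γ)

namespace PreDiffeoValued
variable {p : ℕ} {K : Type*} [Field K] {Γ : Type*} [AddCommGroup Γ] [LinearOrder Γ] [IsOrderedAddMonoid Γ]
  {k : Type*} [Field k] {D : Type*} [AddCommGroup D]

def Q (P : PreDiffeoValued p K Γ k D) : Set K := {x | x ∈ P.R ∧ P.d x = 0}

def IsDense (P : PreDiffeoValued p K Γ k D) : Prop :=
  ∀ a ∈ P.O, ∀ γ : Γ, ∃ q ∈ P.Q, (γ : WithTop Γ) < P.v (a - q)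

end PreDiffeoValued

/-!
Elements algebraic over `𝔽_p` are zero or roots of unity, so they lie in every valuation ring,
their pairwise differences are units there, and each is the `p`-th power of an element of `O`,
hence lies in `Q`. If `a ≠ 0`, choose `c ∈ O` with `v a + val (π c) ≤ 0`. As the `f i - f j` are
units, each `Oⱼ` misses `(c - f i)⁻¹` for at most one `i`, and none if `c ∉ Oⱼ`; by pigeonhole,
either `c ∈ S` or `(c - f i)⁻¹ ∈ S` for some `i`. In the first case `a • π c = π (a c) = 0`; in
the second `q • π c = π a = 0` for `q = a / (c - f i)`, which has `v q ≤ v a`. Both contradict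
`val (q • x) = v q + val x`.
-/

section ValuationRing

variable {K : Type*} [Field K]

theorem mem_of_pow_eq_one {T : Subring K} (hT : ∀ x : K, x ≠ 0 → x ∈ T ∨ x⁻¹ ∈ T) {x : K}
    {N : ℕ} (hN : N ≠ 0) (hx : x ^ N = 1) : x ∈ T := by
  have hx0 : x ≠ 0 := by rintro rfl; simp [hN] at hx
  refine (hT x hx0).elim id fun hinv => ?_
  have hpred : x ^ (N - 1) * x = 1 := by rw [← pow_succ, Nat.sub_add_cancel (by omega), hx]
  rw [← inv_inv x, ← eq_inv_of_mul_eq_one_left hpred, ← inv_pow]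
  exact pow_mem hinv _

theorem inv_sub_mem_of_div_mem {T : Subring K} {x y c : K} (hxy : x ≠ y)
    (hxyT : (x - y)⁻¹ ∈ T) (ht : (c - y) / (c - x) ∈ T) : (c - x)⁻¹ ∈ T := by
  rcases eq_or_ne c x with rfl | hcx
  · simp
  have hid : (c - x)⁻¹ = (x - y)⁻¹ * ((c - y) / (c - x) - 1) := by
    field_simp [sub_ne_zero.mpr hxy, sub_ne_zero.mpr hcx]
    ring
  rw [hid]
  exact mul_mem hxyT (sub_mem ht (one_mem T))

/-- The ultrametric inequality `v (x - y) ≤ max (v (c - x)) (v (c - y))`, in ring form. -/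
theorem inv_sub_mem_or_inv_sub_mem {T : Subring K} (hT : ∀ x : K, x ≠ 0 → x ∈ T ∨ x⁻¹ ∈ T)
    {x y : K} (hxy : x ≠ y) (hxyT : (x - y)⁻¹ ∈ T) (c : K) :
    (c - x)⁻¹ ∈ T ∨ (c - y)⁻¹ ∈ T := by
  rcases eq_or_ne ((c - y) / (c - x)) 0 with ht0 | ht0
  · exact .inl (inv_sub_mem_of_div_mem hxy hxyT (ht0 ▸ zero_mem T))
  rcases hT _ ht0 with ht | ht
  · exact .inl (inv_sub_mem_of_div_mem hxy hxyT ht)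
  · have hyxT : (y - x)⁻¹ ∈ T := by rw [← neg_sub, inv_neg]; exact neg_mem hxyT
    exact .inr (inv_sub_mem_of_div_mem hxy.symm hyxT (by rwa [inv_div] at ht))

theorem forall_mem_or_exists_forall_inv_sub_mem {ι : Type*} [Finite ι] {T : ι → Subring K}
    (hT : ∀ j, ∀ x : K, x ≠ 0 → x ∈ T j ∨ x⁻¹ ∈ T j) {f : ι → K} (hf : Function.Injective f)
    (hfT : ∀ i j, f i ∈ T j) (hsubT : ∀ i i' j, i ≠ i' → (f i - f i')⁻¹ ∈ T j) (c : K) :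
    (∀ j, c ∈ T j) ∨ ∃ i, ∀ j, (c - f i)⁻¹ ∈ T j := by
  by_contra! ⟨⟨j₀, hj₀⟩, hbad⟩
  choose g hg using hbad
  have hg_inj : Function.Injective g := by
    intro i i' hii'
    by_contra hne
    rcases inv_sub_mem_or_inv_sub_mem (hT (g i)) (hf.ne hne) (hsubT i i' _ hne) c with h | h
    · exact hg i h
    · exact hg i' (hii' ▸ h)
  obtain ⟨i, rfl⟩ := Finite.injective_iff_surjective.mp hg_inj j₀
  have hci : c - f i ∈ T (g i) := by
    refine (hT (g i) _ fun h => hg i ?_).resolve_right (hg i)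
    rw [h, inv_zero]; exact zero_mem _
  exact hj₀ (by simpa using add_mem hci (hfT i (g i)))

end ValuationRing

section AlgebraicOverPrime

variable {p : ℕ} {K : Type*} [Field K] [CharP K p]

namespace AlgebraicOverPrime

theorem isIntegral (hp : p.Prime) {x : K} (hx : AlgebraicOverPrime p x) :
    letI := ZMod.algebra K p; IsIntegral (ZMod p) x := by
  let := ZMod.algebra K p
  have := Fact.mk hp
  obtain ⟨f, hf0, hf⟩ := hx
  exact IsAlgebraic.isIntegral ⟨f, hf0, hf⟩

theorem sub (hp : p.Prime) {x y : K} (hx : AlgebraicOverPrime p x)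
    (hy : AlgebraicOverPrime p y) : AlgebraicOverPrime p (x - y) := by
  let := ZMod.algebra K p
  have := Fact.mk hp
  obtain ⟨f, hf, hfx⟩ := (hx.isIntegral hp).sub (hy.isIntegral hp)
  exact ⟨f, hf.ne_zero, hfx⟩

theorem finite_range_pow (hp : p.Prime) {x : K} (hx : AlgebraicOverPrime p x) :
    (Set.range (x ^ · : ℕ → K)).Finite := by
  let := ZMod.algebra K p
  have := Fact.mk hp
  have : Module.Finite (ZMod p) (Algebra.adjoin (ZMod p) {x}) :=
    Module.Finite.iff_fg.mpr (hx.isIntegral hp).fg_adjoin_singleton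
  have : Finite (Algebra.adjoin (ZMod p) {x}) := Module.finite_of_finite (ZMod p)
  refine (Set.toFinite (Algebra.adjoin (ZMod p) {x} : Set K)).subset ?_
  rintro _ ⟨n, rfl⟩
  exact pow_mem (Algebra.self_mem_adjoin_singleton _ x) n

theorem exists_pow_pow_eq_self (hp : p.Prime) {x : K} (hx : AlgebraicOverPrime p x) :
    ∃ r, 0 < r ∧ x ^ p ^ r = x := by
  have := Fact.mk hp
  obtain ⟨m, n, hmn, h⟩ := (hx.finite_range_pow hp).exists_lt_map_eq_of_forall_mem
    (f := fun k => x ^ p ^ k) fun k => Set.mem_range_self _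
  refine ⟨n - m, by omega, iterateFrobenius_inj K p m ?_⟩
  simp only [iterateFrobenius_def, ← pow_mul, ← pow_add, Nat.sub_add_cancel hmn.le]
  exact h.symm

theorem exists_pow_eq_one (hp : p.Prime) {x : K} (hx : AlgebraicOverPrime p x) (hx0 : x ≠ 0) :
    ∃ N ≠ 0, x ^ N = 1 := by
  obtain ⟨r, hr, hxr⟩ := hx.exists_pow_pow_eq_self hp
  have hpr : 1 < p ^ r := Nat.one_lt_pow hr.ne' hp.one_lt
  refine ⟨p ^ r - 1, by omega, mul_right_cancel₀ hx0 ?_⟩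
  rw [← pow_succ, Nat.sub_add_cancel hpr.le, hxr, one_mul]

theorem exists_pow_pow_char_eq_self (hp : p.Prime) {x : K} (hx : AlgebraicOverPrime p x) :
    ∃ m, (x ^ m) ^ p = x := by
  obtain ⟨r, hr, hxr⟩ := hx.exists_pow_pow_eq_self hp
  refine ⟨p ^ (r - 1), ?_⟩
  rw [← pow_mul, ← pow_succ, Nat.sub_add_cancel hr, hxr]

theorem mem (hp : p.Prime) {T : Subring K} (hT : ∀ x : K, x ≠ 0 → x ∈ T ∨ x⁻¹ ∈ T) {x : K}
    (hx : AlgebraicOverPrime p x) : x ∈ T := by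
  rcases eq_or_ne x 0 with rfl | hx0
  · exact zero_mem T
  obtain ⟨N, hN, hxN⟩ := hx.exists_pow_eq_one hp hx0
  exact mem_of_pow_eq_one hT hN hxN

theorem inv_mem (hp : p.Prime) {T : Subring K} (hT : ∀ x : K, x ≠ 0 → x ∈ T ∨ x⁻¹ ∈ T) {x : K}
    (hx : AlgebraicOverPrime p x) : x⁻¹ ∈ T := by
  rcases eq_or_ne x 0 with rfl | hx0
  · simp
  obtain ⟨N, hN, hxN⟩ := hx.exists_pow_eq_one hp hx0
  exact mem_of_pow_eq_one hT hN (by rw [inv_pow, hxN, inv_one])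

end AlgebraicOverPrime

end AlgebraicOverPrime

namespace PreDiffeoValued

variable {p : ℕ} {K : Type*} [Field K] {Γ : Type*} [AddCommGroup Γ] [LinearOrder Γ]
  [IsOrderedAddMonoid Γ] {k : Type*} [Field k] {D : Type*} [AddCommGroup D]
  (P : PreDiffeoValued p K Γ k D)

theorem v_one : P.v 1 = 0 := by
  obtain ⟨γ, hγ⟩ := WithTop.ne_top_iff_exists.mp fun h => one_ne_zero ((P.v_eq_top_iff 1).mp h)
  have h := P.v_mul 1 1
  rw [mul_one, ← hγ, ← WithTop.coe_add, WithTop.coe_inj, left_eq_add] at h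
  rw [← hγ, h, WithTop.coe_zero]

theorem mem_O_or_inv_mem_O (x : K) (hx : x ≠ 0) : x ∈ P.O ∨ x⁻¹ ∈ P.O := by
  simp only [P.mem_O_iff]
  refine (le_total 0 (P.v x)).imp id fun h => ?_
  have hsum : P.v x + P.v x⁻¹ = 0 := by rw [← P.v_mul, mul_inv_cancel₀ hx, P.v_one]
  calc (0 : WithTop Γ) = P.v x + P.v x⁻¹ := hsum.symm
    _ ≤ 0 + P.v x⁻¹ := by gcongr
    _ = P.v x⁻¹ := zero_add _

theorem smul_nsmul {a : K} (ha : a ∈ P.O) (m : ℕ) (z : D) :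
    P.smul a (m • z) = m • P.smul a z :=
  map_nsmul (AddMonoidHom.mk' (P.smul a) (P.smul_add a ha)) m z

theorem char_nsmul_eq_zero [CharP K p] (P : PreDiffeoValued p K Γ k D) (z : D) : p • z = 0 := by
  obtain ⟨c, hc, rfl⟩ := P.pi_surjective z
  let piO : P.O →+ D := AddMonoidHom.mk' (fun x => P.pi x) fun x y => P.pi_add x x.2 y y.2
  have hpc : p • (⟨c, hc⟩ : P.O) = 0 := Subtype.ext (by simp [nsmul_eq_mul])
  calc p • P.pi c = piO (p • ⟨c, hc⟩) := (map_nsmul piO p ⟨c, hc⟩).symm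
    _ = 0 := by rw [hpc, map_zero]

theorem pi_eq_zero_of_mem_Q {x : K} (hx : x ∈ P.Q) : P.pi x = 0 :=
  (P.pi_eq_zero_iff x (P.R_le_O hx.1)).mpr hx

theorem pi_add_of_mem_Q {x y : K} (hx : x ∈ P.O) (hy : y ∈ P.Q) : P.pi (x + y) = P.pi x := by
  rw [P.pi_add x hx y (P.R_le_O hy.1), P.pi_eq_zero_of_mem_Q hy, add_zero]

theorem pi_pow_succ (hp2 : p ≠ 2) {b : K} (hb : b ∈ P.O) (m : ℕ) :
    P.pi (b ^ (m + 1)) = (m + 1) • P.smul (b ^ m) (P.pi b) := by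
  induction m with
  | zero => simp [P.one_smul]
  | succ m ih =>
    have hbm : b ^ (m + 1) ∈ P.O := pow_mem hb _
    rw [pow_succ' b (m + 1), P.char_odd_pi hp2 b hb _ hbm, ih, P.smul_nsmul hb,
      ← P.mul_smul b hb _ (pow_mem hb m), ← pow_succ', ← succ_nsmul]

theorem pow_char_mem_Q [CharP K p] (hp : p ≠ 0) {b : K} (hb : b ∈ P.O) : b ^ p ∈ P.Q := by
  rcases eq_or_ne p 2 with rfl | hp2
  · exact P.char_two_sq rfl b hb
  refine (P.pi_eq_zero_iff _ (pow_mem hb p)).mp ?_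
  obtain ⟨m, rfl⟩ := Nat.exists_eq_succ_of_ne_zero hp
  rw [P.pi_pow_succ hp2 hb]
  exact P.char_nsmul_eq_zero _

theorem mem_Q_of_algebraicOverPrime [CharP K p] (hp : p.Prime) {x : K}
    (hx : AlgebraicOverPrime p x) : x ∈ P.Q := by
  obtain ⟨m, hm⟩ := hx.exists_pow_pow_char_eq_self hp
  rw [← hm]
  exact P.pow_char_mem_Q hp.ne_zero (pow_mem (hx.mem hp P.mem_O_or_inv_mem_O) m)

end PreDiffeoValued

namespace PreDiffeoValuedS

variable {p : ℕ} {K : Type*} [Field K] {Γ : Type*} [AddCommGroup Γ] [LinearOrder Γ]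
  [IsOrderedAddMonoid Γ] {k : Type*} [Field k] {D : Type*} [AddCommGroup D]
  (P : PreDiffeoValuedS p K Γ k D)

theorem exists_mem_O_v_add_val_pi_nonpos {a : K} (ha : a ≠ 0) :
    ∃ c ∈ P.O, P.v a + P.val (P.pi c) ≤ 0 := by
  obtain ⟨γ, hγ⟩ := WithTop.ne_top_iff_exists.mp fun h => ha ((P.v_eq_top_iff a).mp h)
  obtain ⟨y, hy⟩ := P.val_unbounded (-γ)
  obtain ⟨c, hc, rfl⟩ := P.pi_surjective y
  refine ⟨c, hc, ?_⟩
  calc P.v a + P.val (P.pi c) ≤ γ + ↑(-γ) := by rw [← hγ]; gcongr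
    _ = 0 := by rw [← WithTop.coe_add, add_neg_cancel, WithTop.coe_zero]

/-- Since `π` is `Q`-linear with kernel `Q`, here `q • π e = π (q * e) = 0`, which `val` only
allows when `v q + val (π e) > 0`. -/
theorem pos_v_add_val_pi_of_mul_mem_Q {q e : K} (hq : q ∈ P.Q) (he : e ∈ P.O)
    (hqe : q * e ∈ P.Q) : 0 < P.v q + P.val (P.pi e) := by
  by_contra! hle
  have hzero : P.smul q (P.pi e) = 0 := by
    rw [← P.pi_qsmul q hq.1 hq.2 e he, P.pi_eq_zero_of_mem_Q hqe]
  have htop := P.val_smul_of_nonpos q (P.R_le_O hq.1) _ hle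
  rw [hzero, (P.val_eq_top_iff 0).mpr rfl] at htop
  exact absurd (htop ▸ hle) (by simp)

theorem mul_notMem_Q {a c : K} (ha : a ∈ P.Q) (hc : c ∈ P.O)
    (hac : P.v a + P.val (P.pi c) ≤ 0) : a * c ∉ P.Q :=
  fun h => (P.pos_v_add_val_pi_of_mul_mem_Q ha hc h).not_ge hac

theorem mul_inv_sub_notMem_Q {a c y : K} (ha : a ∈ P.Q) (hc : c ∈ P.O)
    (hac : P.v a + P.val (P.pi c) ≤ 0) (hy : y ∈ P.Q) : a * (c - y)⁻¹ ∉ P.Q := by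
  intro hq
  have hpic : P.pi c ≠ 0 := by
    intro h
    rw [h, (P.val_eq_top_iff 0).mpr rfl] at hac
    simp at hac
  have hcy : c - y ≠ 0 := sub_ne_zero.mpr fun h => hpic (h ▸ P.pi_eq_zero_of_mem_Q hy)
  have he : c - y ∈ P.O := sub_mem hc (P.R_le_O hy.1)
  have hqe : a * (c - y)⁻¹ * (c - y) = a := inv_mul_cancel_right₀ hcy a
  have hvq : P.v (a * (c - y)⁻¹) ≤ P.v a :=
    calc P.v (a * (c - y)⁻¹) ≤ P.v (a * (c - y)⁻¹) + P.v (c - y) :=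
          le_add_of_nonneg_right ((P.mem_O_iff _).mp he)
      _ = P.v a := by rw [← P.v_mul, hqe]
  have hpi : P.pi (c - y) = P.pi c := by simpa using (P.pi_add_of_mem_Q he hy).symm
  have hpos := P.pos_v_add_val_pi_of_mul_mem_Q hq he (by rwa [hqe])
  rw [hpi] at hpos
  exact (le_trans (by gcongr) hac).not_gt hpos

end PreDiffeoValuedS

theorem eq_zero_of_smul_good_multivaluation_subset_Q_general
    {p : ℕ} (hp : p.Prime) {K : Type*} [Field K] [CharP K p]
    {Γ : Type*} [AddCommGroup Γ] [LinearOrder Γ] [IsOrderedAddMonoid Γ]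
    {k : Type*} [Field k] {D : Type*} [AddCommGroup D]
    (P : PreDiffeoValuedS p K Γ k D)
    (n : ℕ)
    (Os : Fin n → Subring K)
    (hOs : ∀ i, ∀ x : K, x ≠ 0 → x ∈ Os i ∨ x⁻¹ ∈ Os i)
    (f : Fin n → K) (hfinj : Function.Injective f)
    (hfalg : ∀ i, AlgebraicOverPrime p (f i))
    (a : K) (haS : ∀ s : K, (∀ i, s ∈ Os i) → a * s ∈ P.Q) :
    a = 0 := by
  by_contra ha
  have haQ : a ∈ P.Q := by simpa using haS 1 fun i => one_mem (Os i)
  obtain ⟨c, hcO, hc⟩ := P.exists_mem_O_v_add_val_pi_nonpos ha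
  rcases forall_mem_or_exists_forall_inv_sub_mem hOs hfinj
    (fun i j => (hfalg i).mem hp (hOs j))
    (fun i i' j _ => ((hfalg i).sub hp (hfalg i')).inv_mem hp (hOs j)) c with hcS | ⟨i, hi⟩
  · exact P.mul_notMem_Q haQ hcO hc (haS c hcS)
  · exact P.mul_inv_sub_notMem_Q haQ hcO hc (P.mem_Q_of_algebraicOverPrime hp (hfalg i))
      (haS _ hi)

/-- Assume the pre-diffeo-valued field structure is dense.  Let `n ≥ 1`,
let `O₁, …, Oₙ` be valuation subrings of `K`, set `S = O₁ ∩ ⋯ ∩ Oₙ`, and assume `K`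
contains at least `n` pairwise distinct elements algebraic over the prime field `𝔽_p`.
If `a ∈ K` satisfies `a·S ⊆ Q`, then `a = 0`. -/
theorem eq_zero_of_smul_good_multivaluation_subset_Q
    {p : ℕ} (hp : p.Prime) {K : Type*} [Field K] [CharP K p]
    {Γ : Type*} [AddCommGroup Γ] [LinearOrder Γ] [IsOrderedAddMonoid Γ]
    {k : Type*} [Field k] {D : Type*} [AddCommGroup D]
    (P : PreDiffeoValuedS p K Γ k D)
    (hdense : P.toPreDiffeoValued.IsDense)
    (n : ℕ) (hn : 1 ≤ n)
    (Os : Fin n → Subring K)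
    (hOs : ∀ i, ∀ x : K, x ≠ 0 → x ∈ Os i ∨ x⁻¹ ∈ Os i)
    (f : Fin n → K) (hfinj : Function.Injective f)
    (hfalg : ∀ i, AlgebraicOverPrime p (f i))
    (a : K) (haS : ∀ s : K, (∀ i, s ∈ Os i) → a * s ∈ P.Q) :
    a = 0 :=
  eq_zero_of_smul_good_multivaluation_subset_Q_general hp P n Os hOs f hfinj hfalg a haS
end

section
/- Assume the pre-diffeo-valued field structure is dense, and set I := Q ∩ M. Then: (1) R ≠ K and Q ≠ K; (2) I is a proper ideal of Q, and moreover r·i ∈ I for every r ∈ R and i ∈ I, so I is also a proper ideal of R; (3) every element of K can be written as q₁/q₂ with q₁, q₂ ∈ Q and q₂ ≠ 0 (so Frac(Q) = Frac(R) = K); (4) Q is a local ring with maximal ideal I, i.e. every element of Q \ I is a unit of Q; (5) I ≠ 0. -/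
namespace PreDiffeoValued

variable {p : ℕ} {K : Type*} [Field K] {Γ : Type*} [AddCommGroup Γ] [LinearOrder Γ]
  [IsOrderedAddMonoid Γ] {k : Type*} [Field k] {D : Type*} [AddCommGroup D]
  (P : PreDiffeoValued p K Γ k D)

theorem v_zero : P.v 0 = ⊤ := (P.v_eq_top_iff 0).2 rfl

theorem v_ne_top {x : K} (hx : x ≠ 0) : P.v x ≠ ⊤ := fun h => hx ((P.v_eq_top_iff x).1 h)

def toAddValuation : AddValuation K (WithTop Γ) :=
  AddValuation.of P.v P.v_zero P.v_one P.v_add P.v_mul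

theorem v_inv (x : K) : P.v x⁻¹ = -P.v x := P.toAddValuation.map_inv

theorem v_nonneg_of_mem_O {x : K} (hx : x ∈ P.O) : 0 ≤ P.v x := (P.mem_O_iff x).1 hx

theorem ne_zero_of_v_eq_coe {x : K} {γ : Γ} (h : P.v x = γ) : x ≠ 0 := by
  rintro rfl
  simp [v_zero] at h

theorem inv_notMem_O_of_v_pos {x : K} (hx0 : x ≠ 0) (hx : 0 < P.v x) : x⁻¹ ∉ P.O := by
  obtain ⟨γ, hγ⟩ := WithTop.ne_top_iff_exists.1 (P.v_ne_top hx0)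
  rw [P.mem_O_iff, P.v_inv, ← hγ, ← WithTop.LinearOrderedAddCommGroup.coe_neg,
    WithTop.coe_nonneg, not_le, neg_neg_iff_pos]
  exact WithTop.coe_pos.1 (hγ ▸ hx)

theorem inv_mem_O_of_notMem_O {x : K} (hx : x ∉ P.O) : x⁻¹ ∈ P.O := by
  rw [P.mem_O_iff, not_le] at hx
  obtain ⟨γ, hγ⟩ := WithTop.ne_top_iff_exists.1 (hx.trans_le le_top).ne
  rw [P.mem_O_iff, P.v_inv, ← hγ, ← WithTop.LinearOrderedAddCommGroup.coe_neg,
    WithTop.coe_nonneg, neg_nonneg]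
  exact (WithTop.coe_lt_zero.1 (hγ ▸ hx)).le

theorem d_one : P.d 1 = 0 := by
  simpa [P.res_one] using P.d_leibniz 1 P.R.one_mem 1 P.R.one_mem

theorem one_mem_Q : (1 : K) ∈ P.Q := ⟨P.R.one_mem, P.d_one⟩

theorem mem_O_of_mem_Q {x : K} (hx : x ∈ P.Q) : x ∈ P.O := P.R_le_O hx.1

theorem add_mem_Q {a b : K} (ha : a ∈ P.Q) (hb : b ∈ P.Q) : a + b ∈ P.Q :=
  ⟨P.R.add_mem ha.1 hb.1, by rw [P.d_add a ha.1 b hb.1, ha.2, hb.2, add_zero]⟩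

theorem mul_mem_Q_of_res_eq_zero {r x : K} (hr : r ∈ P.R) (hx : x ∈ P.Q) (hres : P.res x = 0) :
    r * x ∈ P.Q :=
  ⟨P.R.mul_mem hr hx.1, by rw [P.d_leibniz r hr x hx.1, hx.2, hres, mul_zero, zero_mul, add_zero]⟩

theorem smul_zero {a : K} (ha : a ∈ P.O) : P.smul a 0 = 0 := by
  simpa using P.smul_add a ha 0 0

theorem pi_one : P.pi 1 = 0 := (P.pi_eq_zero_iff 1 P.O.one_mem).2 P.one_mem_Q

theorem inv_mem_Q_of_v_eq_zero {q : K} (hq : q ∈ P.Q) (hv : P.v q = 0) : q⁻¹ ∈ P.Q := by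
  have hq0 : q ≠ 0 := P.ne_zero_of_v_eq_coe (γ := 0) hv
  have hqO := P.mem_O_of_mem_Q hq
  have hqiO : q⁻¹ ∈ P.O := (P.mem_O_iff _).2 (by rw [P.v_inv, hv, neg_zero])
  refine (P.pi_eq_zero_iff q⁻¹ hqiO).1 ?_
  calc P.pi q⁻¹ = P.smul (q⁻¹ * q) (P.pi q⁻¹) := by rw [inv_mul_cancel₀ hq0, P.one_smul]
    _ = P.smul q⁻¹ (P.pi (q * q⁻¹)) := by
      rw [P.mul_smul _ hqiO _ hqO, P.pi_qsmul q hq.1 hq.2 _ hqiO]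
    _ = 0 := by rw [mul_inv_cancel₀ hq0, P.pi_one, P.smul_zero hqiO]

def I : Set K := P.Q ∩ {x | 0 < P.v x}

theorem one_notMem_I : (1 : K) ∉ P.I := fun h => by simpa [v_one] using h.2

theorem add_mem_I {i j : K} (hi : i ∈ P.I) (hj : j ∈ P.I) : i + j ∈ P.I :=
  ⟨P.add_mem_Q hi.1 hj.1, (lt_min hi.2 hj.2).trans_le (P.v_add i j)⟩

theorem mul_mem_I_of_mem_R {r i : K} (hr : r ∈ P.R) (hi : i ∈ P.I) : r * i ∈ P.I := by
  have hres : P.res i = 0 := (P.res_eq_zero_iff i (P.mem_O_of_mem_Q hi.1)).2 hi.2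
  refine ⟨P.mul_mem_Q_of_res_eq_zero hr hi.1 hres, ?_⟩
  show 0 < P.v (r * i)
  rw [P.v_mul]
  exact lt_add_of_nonneg_of_lt (P.v_nonneg_of_mem_O (P.R_le_O hr)) hi.2

theorem exists_mul_eq_one_of_notMem_I {q : K} (hq : q ∈ P.Q) (hqI : q ∉ P.I) :
    ∃ q' ∈ P.Q, q * q' = 1 := by
  have hv : P.v q = 0 :=
    le_antisymm (not_lt.1 fun h => hqI ⟨hq, h⟩) (P.v_nonneg_of_mem_O (P.mem_O_of_mem_Q hq))
  exact ⟨q⁻¹, P.inv_mem_Q_of_v_eq_zero hq hv, mul_inv_cancel₀ (P.ne_zero_of_v_eq_coe (γ := 0) hv)⟩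

namespace IsDense

variable {P}

theorem exists_mem_Q_v_eq (hP : P.IsDense) {γ : Γ} (hγ : 0 ≤ γ) : ∃ q ∈ P.Q, P.v q = γ := by
  obtain ⟨a, ha⟩ := P.v_surj γ
  obtain ⟨q, hq, hlt⟩ := hP a ((P.mem_O_iff a).2 (ha ▸ WithTop.coe_nonneg.2 hγ)) γ
  refine ⟨q, hq, ?_⟩
  rw [← ha]
  refine P.toAddValuation.map_eq_of_lt_sub ?_
  rw [AddValuation.map_sub_swap]
  show P.v a < P.v (a - q)
  rwa [ha]

theorem exists_pos (hP : P.IsDense) : ∃ γ : Γ, 0 < γ := by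
  by_contra! hΓ
  obtain ⟨r, hr, hdr⟩ := P.d_surjective 1
  obtain ⟨q, hq, hlt⟩ := hP r (P.R_le_O hr) 0
  have hrq : P.v (r - q) = ⊤ := by
    by_contra hne
    obtain ⟨δ, hδ⟩ := WithTop.ne_top_iff_exists.1 hne
    rw [← hδ, WithTop.coe_lt_coe] at hlt
    exact absurd hlt (not_lt.2 (hΓ δ))
  rw [P.v_eq_top_iff, sub_eq_zero] at hrq
  simp [hrq, hq.2] at hdr

theorem exists_ne_zero_mem_I (hP : P.IsDense) : ∃ i ∈ P.I, i ≠ 0 := by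
  obtain ⟨γ, hγ⟩ := hP.exists_pos
  obtain ⟨q, hq, hv⟩ := hP.exists_mem_Q_v_eq hγ.le
  refine ⟨q, ⟨hq, ?_⟩, P.ne_zero_of_v_eq_coe hv⟩
  show 0 < P.v q
  rw [hv]
  exact_mod_cast hγ

theorem exists_notMem_O (hP : P.IsDense) : ∃ x, x ∉ P.O := by
  obtain ⟨i, hi, hi0⟩ := hP.exists_ne_zero_mem_I
  exact ⟨i⁻¹, P.inv_notMem_O_of_v_pos hi0 hi.2⟩

end IsDense

end PreDiffeoValued

namespace PreDiffeoValuedS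

variable {p : ℕ} {K : Type*} [Field K] {Γ : Type*} [AddCommGroup Γ] [LinearOrder Γ]
  [IsOrderedAddMonoid Γ] {k : Type*} [Field k] {D : Type*} [AddCommGroup D]
  {P : PreDiffeoValuedS p K Γ k D}

theorem exists_mem_Q_smul_eq_zero (hP : P.IsDense) (y : D) :
    ∃ q ∈ P.Q, q ≠ 0 ∧ P.smul q y = 0 := by
  by_cases hy : y = 0
  · exact ⟨1, P.one_mem_Q, one_ne_zero, by rw [hy, P.one_smul]⟩
  obtain ⟨δ, hδ⟩ := WithTop.ne_top_iff_exists.1 (mt (P.val_eq_top_iff y).1 hy)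
  have hδ0 : δ ≤ 0 :=
    WithTop.coe_le_zero.1 (hδ ▸ (P.val_nonpos_or_top y).resolve_right (hδ ▸ WithTop.coe_ne_top))
  obtain ⟨γ, hγ⟩ := hP.exists_pos
  obtain ⟨q, hq, hv⟩ := hP.exists_mem_Q_v_eq (sub_nonneg.2 (hδ0.trans hγ.le))
  refine ⟨q, hq, P.ne_zero_of_v_eq_coe hv,
    (P.val_eq_top_iff _).1 (P.val_smul_of_pos q (P.mem_O_of_mem_Q hq) y ?_)⟩
  rw [hv, ← hδ, ← WithTop.coe_add, sub_add_cancel]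
  exact_mod_cast hγ

theorem exists_mem_Q_mul_mem_Q (hP : P.IsDense) {a : K} (ha : a ∈ P.O) :
    ∃ q ∈ P.Q, q ≠ 0 ∧ q * a ∈ P.Q := by
  obtain ⟨q, hq, hq0, hqa⟩ := exists_mem_Q_smul_eq_zero hP (P.pi a)
  refine ⟨q, hq, hq0, (P.pi_eq_zero_iff _ (P.O.mul_mem (P.mem_O_of_mem_Q hq) ha)).1 ?_⟩
  rw [P.pi_qsmul q hq.1 hq.2 a ha, hqa]

theorem exists_eq_div (hP : P.IsDense) (x : K) :
    ∃ q₁ ∈ P.Q, ∃ q₂ ∈ P.Q, q₂ ≠ 0 ∧ x = q₁ / q₂ := by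
  by_cases hx : x ∈ P.O
  · obtain ⟨q, hq, hq0, hqx⟩ := exists_mem_Q_mul_mem_Q hP hx
    exact ⟨q * x, hqx, q, hq, hq0, by field_simp⟩
  · have hx0 : x ≠ 0 := by rintro rfl; exact hx P.O.zero_mem
    obtain ⟨q, hq, hq0, hqx⟩ := exists_mem_Q_mul_mem_Q hP (P.inv_mem_O_of_notMem_O hx)
    exact ⟨q, hq, q * x⁻¹, hqx, by simp [hq0, hx0], by field_simp⟩

end PreDiffeoValuedS

theorem basic_structure_of_dense_preDiffeoValued_general
    {p : ℕ} {K : Type*} [Field K]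
    {Γ : Type*} [AddCommGroup Γ] [LinearOrder Γ] [IsOrderedAddMonoid Γ]
    {k : Type*} [Field k] {D : Type*} [AddCommGroup D]
    (P : PreDiffeoValuedS p K Γ k D)
    (hdense : P.toPreDiffeoValued.IsDense) :
    -- (1) `R` and `Q` are proper subrings of `K`
    (((P.R : Set K) ≠ Set.univ) ∧ (P.Q ≠ Set.univ)) ∧
    -- (2) `I = Q ∩ M` is a proper ideal of `Q`, and is an ideal of `R` as well
    (((1 : K) ∉ P.Q ∩ {x : K | 0 < P.v x}) ∧
      (∀ i ∈ P.Q ∩ {x : K | 0 < P.v x}, ∀ j ∈ P.Q ∩ {x : K | 0 < P.v x},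
        i + j ∈ P.Q ∩ {x : K | 0 < P.v x}) ∧
      (∀ q ∈ P.Q, ∀ i ∈ P.Q ∩ {x : K | 0 < P.v x},
        q * i ∈ P.Q ∩ {x : K | 0 < P.v x}) ∧
      (∀ r ∈ P.R, ∀ i ∈ P.Q ∩ {x : K | 0 < P.v x},
        r * i ∈ P.Q ∩ {x : K | 0 < P.v x})) ∧
    -- (3) `Frac(Q) = Frac(R) = K`
    (∀ x : K, ∃ q₁ ∈ P.Q, ∃ q₂ ∈ P.Q, q₂ ≠ 0 ∧ x = q₁ / q₂) ∧
    -- (4) `Q` is local with maximal ideal `I`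
    (∀ q ∈ P.Q, q ∉ P.Q ∩ {x : K | 0 < P.v x} → ∃ q' ∈ P.Q, q * q' = 1) ∧
    -- (5) `I ≠ 0`
    (∃ i ∈ P.Q ∩ {x : K | 0 < P.v x}, i ≠ (0 : K)) := by
  obtain ⟨x, hx⟩ := hdense.exists_notMem_O
  exact ⟨⟨fun h => hx (P.R_le_O (h ▸ trivial)), fun h => hx (P.mem_O_of_mem_Q (h ▸ trivial))⟩,
    ⟨P.one_notMem_I, fun _ hi _ hj => P.add_mem_I hi hj,
      fun _ hq _ hi => P.mul_mem_I_of_mem_R hq.1 hi, fun _ hr _ hi => P.mul_mem_I_of_mem_R hr hi⟩,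
    PreDiffeoValuedS.exists_eq_div hdense, fun _ hq hqI => P.exists_mul_eq_one_of_notMem_I hq hqI,
    hdense.exists_ne_zero_mem_I⟩

/-- Assume the pre-diffeo-valued field structure is dense and set
`I := Q ∩ M`.  Then: (1) `R ≠ K` and `Q ≠ K`; (2) `I` is a proper ideal of `Q`, and
`r·i ∈ I` for all `r ∈ R`, `i ∈ I`, so `I` is also a proper ideal of `R`;
(3) every element of `K` is a quotient of elements of `Q` (so `Frac Q = Frac R = K`);
(4) `Q` is a local ring with maximal ideal `I`; (5) `I ≠ 0`. -/
theorem basic_structure_of_dense_preDiffeoValued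
    {p : ℕ} (hp : p.Prime) {K : Type*} [Field K] [CharP K p]
    {Γ : Type*} [AddCommGroup Γ] [LinearOrder Γ] [IsOrderedAddMonoid Γ]
    {k : Type*} [Field k] {D : Type*} [AddCommGroup D]
    (P : PreDiffeoValuedS p K Γ k D)
    (hdense : P.toPreDiffeoValued.IsDense) :
    -- (1) `R` and `Q` are proper subrings of `K`
    (((P.R : Set K) ≠ Set.univ) ∧ (P.Q ≠ Set.univ)) ∧
    -- (2) `I = Q ∩ M` is a proper ideal of `Q`, and is an ideal of `R` as well
    (((1 : K) ∉ P.Q ∩ {x : K | 0 < P.v x}) ∧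
      (∀ i ∈ P.Q ∩ {x : K | 0 < P.v x}, ∀ j ∈ P.Q ∩ {x : K | 0 < P.v x},
        i + j ∈ P.Q ∩ {x : K | 0 < P.v x}) ∧
      (∀ q ∈ P.Q, ∀ i ∈ P.Q ∩ {x : K | 0 < P.v x},
        q * i ∈ P.Q ∩ {x : K | 0 < P.v x}) ∧
      (∀ r ∈ P.R, ∀ i ∈ P.Q ∩ {x : K | 0 < P.v x},
        r * i ∈ P.Q ∩ {x : K | 0 < P.v x})) ∧
    -- (3) `Frac(Q) = Frac(R) = K`
    (∀ x : K, ∃ q₁ ∈ P.Q, ∃ q₂ ∈ P.Q, q₂ ≠ 0 ∧ x = q₁ / q₂) ∧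
    -- (4) `Q` is local with maximal ideal `I`
    (∀ q ∈ P.Q, q ∉ P.Q ∩ {x : K | 0 < P.v x} → ∃ q' ∈ P.Q, q * q' = 1) ∧
    -- (5) `I ≠ 0`
    (∃ i ∈ P.Q ∩ {x : K | 0 < P.v x}, i ≠ (0 : K)) :=
  basic_structure_of_dense_preDiffeoValued_general P hdense
end
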